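/- arXiv:1005.2487 — 2 statements merged into one kernel-verified Lean document; each statement's English description precedes it below -/
import Mathlib

section
/- Let v : ℝ → ℝ ∪ {+∞} be proper, convex, lower semicontinuous, nonincreasing, with v(0) = 0 and -1 ∈ ∂v(0). For p ∈ [1,∞], the function ρ_v(X) = inf_{λ ∈ ℝ} [λ + 𝔼(v(X + λ))] on Lᵖ is convex and monotone (X ≥ Y a.e. implies ρ_v(X) ≤ ρ_v(Y)). -/
open MeasureTheory

/-!
Since `v y ≥ -y`, every expectation `𝔼 v(U)` with `U` integrable is bounded below by `-𝔼 U`, and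
when it is also finite, `v ∘ U` is a.e. real and integrable, so `expE` is an honest Bochner
integral there. Convexity of `v` gives, pointwise,
`v(aX + bY + (a λ₁ + b λ₂)) ≤ a v(X + λ₁) + b v(Y + λ₂)`; integrating bounds the objective of
`aX + bY` at `a λ₁ + b λ₂` by `a` times that of `X` at `λ₁` plus `b` times that of `Y` at `λ₂`,
and taking infima over `λ₁, λ₂` yields convexity of `ρ_v`. Monotonicity is immediate from `v`
being nonincreasing.
-/

/-- The positive part of an extended real, as an `ℝ≥0∞`. -/
noncomputable def epos (a : EReal) : ENNReal := if a = ⊤ then ⊤ else ENNReal.ofReal a.toReal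

/-- Expectation of an `EReal`-valued random variable (`+∞` as soon as the
positive part has infinite integral, in particular if `Y = +∞` on a set of
positive measure). -/
noncomputable def expE {Ω : Type*} [MeasurableSpace Ω] (μ : Measure Ω) (Y : Ω → EReal) : EReal :=
  ((∫⁻ ω, epos (Y ω) ∂μ : ENNReal) : EReal) - ((∫⁻ ω, epos (-(Y ω)) ∂μ : ENNReal) : EReal)

/-- Convexity for an `EReal`-valued function on `ℝ`. -/
def ERealConvexOn (v : ℝ → EReal) : Prop :=
  ∀ x y a b : ℝ, 0 ≤ a → 0 ≤ b → a + b = 1 →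
    v (a * x + b * y) ≤ (a : EReal) * v x + (b : EReal) * v y

/-- The OCE-type risk measure `ρ_v(X) = inf_{λ ∈ ℝ} [λ + 𝔼(v(X + λ))]`. -/
noncomputable def rho {Ω : Type*} [MeasurableSpace Ω] (μ : Measure Ω) (v : ℝ → EReal)
    (X : Ω → ℝ) : EReal :=
  ⨅ l : ℝ, ((l : EReal) + expE μ (fun ω => v (X ω + l)))

namespace EReal

lemma coe_mul_iInf_of_pos {ι : Sort*} {f : ι → EReal} {a : ℝ} (ha : 0 < a) :
    (a : EReal) * ⨅ i, f i = ⨅ i, (a : EReal) * f i := by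
  have ha' : (0 : EReal) < a := EReal.coe_pos.2 ha
  refine le_antisymm (le_iInf fun i => mul_le_mul_of_nonneg_left (iInf_le f i) ha'.le) ?_
  rw [← div_le_iff_le_mul ha' (coe_ne_top a)]
  exact le_iInf fun i => (div_le_iff_le_mul ha' (coe_ne_top a)).2 (iInf_le _ i)

lemma coe_mul_ne_bot {a : ℝ} (ha : 0 ≤ a) {x : EReal} (hx : x ≠ ⊥) : (a : EReal) * x ≠ ⊥ :=
  (mul_ne_bot _ _).2
    ⟨.inl (coe_ne_bot a), .inr hx, .inl (coe_ne_top a), .inl (EReal.coe_nonneg.2 ha)⟩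

-- Excluding `⊥` on both sides rules out the junk value `⊥ + ⊤ = ⊥`.
lemma le_iInf_add_iInf {ι κ : Sort*} {f : ι → EReal} {g : κ → EReal} {c : EReal}
    (hf : ⨅ i, f i ≠ ⊥) (hg : ⨅ j, g j ≠ ⊥) (h : ∀ i j, c ≤ f i + g j) :
    c ≤ (⨅ i, f i) + ⨅ j, g j := by
  refine le_of_forall_lt_iff_le.mp fun z hz => ?_
  have hf' : ⨅ i, f i ≠ ⊤ := fun h => by
    rw [h, top_add_of_ne_bot hg] at hz; exact not_top_lt hz
  have hg' : ⨅ j, g j ≠ ⊤ := fun h => by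
    rw [h, add_top_of_ne_bot hf] at hz; exact not_top_lt hz
  lift ⨅ i, f i to ℝ using ⟨hf', hf⟩ with F hF
  lift ⨅ j, g j to ℝ using ⟨hg', hg⟩ with G hG
  rw [← coe_add, EReal.coe_lt_coe_iff] at hz
  obtain ⟨j, hj⟩ :=
    iInf_lt_iff.1 (hG ▸ (EReal.coe_lt_coe_iff.2 (by linarith) : (G : EReal) < (z - F : ℝ)))
  have hj_bot : g j ≠ ⊥ := ne_bot_of_le_ne_bot (hG ▸ EReal.coe_ne_bot G) (iInf_le g j)
  lift g j to ℝ using ⟨ne_top_of_lt hj, hj_bot⟩ with y hy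
  rw [EReal.coe_lt_coe_iff] at hj
  obtain ⟨i, hi⟩ :=
    iInf_lt_iff.1 (hF ▸ (EReal.coe_lt_coe_iff.2 (by linarith) : (F : EReal) < (z - y : ℝ)))
  calc c ≤ f i + y := hy ▸ h i j
    _ ≤ ((z - y : ℝ) : EReal) + y := by gcongr
    _ = z := by rw [← coe_add]; norm_num

end EReal

@[simp] lemma epos_coe (x : ℝ) : epos x = ENNReal.ofReal x := by simp [epos]

lemma epos_eq_top_iff {x : EReal} : epos x = ⊤ ↔ x = ⊤ := by
  by_cases hx : x = ⊤ <;> simp [epos, hx]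

lemma epos_mono {a b : EReal} (h : a ≤ b) : epos a ≤ epos b := by
  by_cases hb : b = ⊤
  · simp [epos, hb]
  have ha : a ≠ ⊤ := ne_top_of_le_ne_top hb h
  by_cases ha' : a = ⊥
  · simp [epos, ha']
  simp only [epos, if_neg ha, if_neg hb]
  exact ENNReal.ofReal_le_ofReal (EReal.toReal_le_toReal h ha' hb)

lemma measurable_epos : Measurable epos :=
  Measurable.ite (measurableSet_singleton ⊤) measurable_const
    (ENNReal.measurable_ofReal.comp measurable_ereal_toReal)

lemma enorm_toReal_le_epos_add_epos_neg (x : EReal) : ‖x.toReal‖ₑ ≤ epos x + epos (-x) := by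
  induction x using EReal.rec with
  | bot | top => simp
  | coe r =>
    rw [EReal.toReal_coe, ← EReal.coe_neg, epos_coe, epos_coe, Real.enorm_eq_ofReal_abs]
    rcases le_total 0 r with hr | hr
    · rw [abs_of_nonneg hr]; exact le_self_add
    · rw [abs_of_nonpos hr]; exact le_add_self

section expE

variable {Ω : Type*} [MeasurableSpace Ω] {μ : Measure Ω}

lemma expE_mono {Y Z : Ω → EReal} (h : ∀ᵐ ω ∂μ, Y ω ≤ Z ω) : expE μ Y ≤ expE μ Z :=
  EReal.sub_le_sub
    (EReal.coe_ennreal_le_coe_ennreal_iff.2 (lintegral_mono_ae (h.mono fun _ hω => epos_mono hω)))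
    (EReal.coe_ennreal_le_coe_ennreal_iff.2
      (lintegral_mono_ae (h.mono fun _ hω => epos_mono (EReal.neg_le_neg_iff.2 hω))))

lemma expE_congr_ae {Y Z : Ω → EReal} (h : ∀ᵐ ω ∂μ, Y ω = Z ω) : expE μ Y = expE μ Z :=
  le_antisymm (expE_mono (h.mono fun _ hω => hω.le)) (expE_mono (h.mono fun _ hω => hω.ge))

lemma expE_coe {f : Ω → ℝ} (hf : Integrable f μ) :
    expE μ (fun ω => (f ω : EReal)) = ((∫ ω, f ω ∂μ : ℝ) : EReal) := by
  have hneg : ∫⁻ ω, ENNReal.ofReal (-f ω) ∂μ ≠ ⊤ := hf.neg.lintegral_lt_top.ne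
  simp only [expE, ← EReal.coe_neg, epos_coe]
  rw [← EReal.coe_ennreal_toReal hf.lintegral_lt_top.ne,
    ← EReal.coe_ennreal_toReal hneg, ← EReal.coe_sub,
    integral_eq_lintegral_pos_part_sub_lintegral_neg_part hf]

lemma coe_integral_le_expE {f : Ω → ℝ} {Y : Ω → EReal} (hf : Integrable f μ)
    (h : ∀ᵐ ω ∂μ, (f ω : EReal) ≤ Y ω) : ((∫ ω, f ω ∂μ : ℝ) : EReal) ≤ expE μ Y :=
  expE_coe hf ▸ expE_mono h

lemma lintegral_epos_neg_ne_top {f : Ω → ℝ} {Y : Ω → EReal} (hf : Integrable f μ)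
    (h : ∀ᵐ ω ∂μ, (f ω : EReal) ≤ Y ω) : ∫⁻ ω, epos (-Y ω) ∂μ ≠ ⊤ := by
  refine ne_top_of_le_ne_top hf.neg.lintegral_lt_top.ne (lintegral_mono_ae ?_)
  filter_upwards [h] with ω hω
  rw [← epos_coe, Pi.neg_apply, EReal.coe_neg]
  exact epos_mono (EReal.neg_le_neg_iff.2 hω)

lemma lintegral_epos_ne_top_of_expE_ne_top {Y : Ω → EReal}
    (hneg : ∫⁻ ω, epos (-Y ω) ∂μ ≠ ⊤) (hE : expE μ Y ≠ ⊤) : ∫⁻ ω, epos (Y ω) ∂μ ≠ ⊤ := by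
  intro h
  rw [expE, h, EReal.coe_ennreal_top, EReal.top_sub (by simpa using hneg)] at hE
  exact hE rfl

variable {Y : Ω → EReal}

lemma integrable_toReal_of_lintegral_epos_ne_top (hY : AEMeasurable Y μ)
    (hpos : ∫⁻ ω, epos (Y ω) ∂μ ≠ ⊤) (hneg : ∫⁻ ω, epos (-Y ω) ∂μ ≠ ⊤) :
    Integrable (fun ω => (Y ω).toReal) μ := by
  refine ⟨(measurable_ereal_toReal.comp_aemeasurable hY).aestronglyMeasurable, ?_⟩
  calc ∫⁻ ω, ‖(Y ω).toReal‖ₑ ∂μ ≤ ∫⁻ ω, (epos (Y ω) + epos (-Y ω)) ∂μ :=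
        lintegral_mono fun ω => enorm_toReal_le_epos_add_epos_neg (Y ω)
    _ = ∫⁻ ω, epos (Y ω) ∂μ + ∫⁻ ω, epos (-Y ω) ∂μ :=
        lintegral_add_left' (measurable_epos.comp_aemeasurable hY) _
    _ < ⊤ := ENNReal.add_lt_top.2 ⟨hpos.lt_top, hneg.lt_top⟩

lemma ae_eq_coe_toReal_of_lintegral_epos_ne_top (hY : AEMeasurable Y μ)
    (hpos : ∫⁻ ω, epos (Y ω) ∂μ ≠ ⊤) (hneg : ∫⁻ ω, epos (-Y ω) ∂μ ≠ ⊤) :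
    ∀ᵐ ω ∂μ, Y ω = ((Y ω).toReal : EReal) := by
  filter_upwards [ae_lt_top' (measurable_epos.comp_aemeasurable hY) hpos,
    ae_lt_top' (measurable_epos.comp_aemeasurable hY.neg) hneg] with ω htop hbot
  refine (EReal.coe_toReal (fun h => ?_) (fun h => ?_)).symm
  · exact htop.ne (epos_eq_top_iff.2 h)
  · exact hbot.ne (epos_eq_top_iff.2 (by simp [h]))

lemma expE_eq_integral_toReal (hY : AEMeasurable Y μ)
    (hpos : ∫⁻ ω, epos (Y ω) ∂μ ≠ ⊤) (hneg : ∫⁻ ω, epos (-Y ω) ∂μ ≠ ⊤) :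
    expE μ Y = ((∫ ω, (Y ω).toReal ∂μ : ℝ) : EReal) := by
  rw [expE_congr_ae (ae_eq_coe_toReal_of_lintegral_epos_ne_top hY hpos hneg),
    expE_coe (integrable_toReal_of_lintegral_epos_ne_top hY hpos hneg)]

lemma expE_le_coe_mul_add_coe_mul {W Z₁ Z₂ : Ω → EReal} {a b : ℝ}
    (hZ₁ : AEMeasurable Z₁ μ) (hZ₂ : AEMeasurable Z₂ μ)
    (hneg₁ : ∫⁻ ω, epos (-Z₁ ω) ∂μ ≠ ⊤) (hneg₂ : ∫⁻ ω, epos (-Z₂ ω) ∂μ ≠ ⊤)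
    (hE₁ : expE μ Z₁ ≠ ⊤) (hE₂ : expE μ Z₂ ≠ ⊤)
    (h : ∀ᵐ ω ∂μ, W ω ≤ a * Z₁ ω + b * Z₂ ω) :
    expE μ W ≤ a * expE μ Z₁ + b * expE μ Z₂ := by
  have hpos₁ := lintegral_epos_ne_top_of_expE_ne_top hneg₁ hE₁
  have hpos₂ := lintegral_epos_ne_top_of_expE_ne_top hneg₂ hE₂
  have hi₁ := integrable_toReal_of_lintegral_epos_ne_top hZ₁ hpos₁ hneg₁
  have hi₂ := integrable_toReal_of_lintegral_epos_ne_top hZ₂ hpos₂ hneg₂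
  calc expE μ W
      ≤ expE μ (fun ω => ((a * (Z₁ ω).toReal + b * (Z₂ ω).toReal : ℝ) : EReal)) := by
        refine expE_mono ?_
        filter_upwards [h, ae_eq_coe_toReal_of_lintegral_epos_ne_top hZ₁ hpos₁ hneg₁,
          ae_eq_coe_toReal_of_lintegral_epos_ne_top hZ₂ hpos₂ hneg₂] with ω hω h₁ h₂
        rw [h₁, h₂] at hω
        exact_mod_cast hω
    _ = a * expE μ Z₁ + b * expE μ Z₂ := by
        have hi : Integrable (fun ω => a * (Z₁ ω).toReal + b * (Z₂ ω).toReal) μ :=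
          (hi₁.const_mul a).add (hi₂.const_mul b)
        rw [expE_coe hi, integral_add (hi₁.const_mul a) (hi₂.const_mul b),
          integral_const_mul, integral_const_mul,
          expE_eq_integral_toReal hZ₁ hpos₁ hneg₁, expE_eq_integral_toReal hZ₂ hpos₂ hneg₂]
        norm_cast

end expE

section rho

variable {Ω : Type*} [MeasurableSpace Ω] {μ : Measure Ω} {v : ℝ → EReal}

lemma neg_integral_le_expE_comp (hv : ∀ y : ℝ, ((-y : ℝ) : EReal) ≤ v y) {U : Ω → ℝ}
    (hU : Integrable U μ) : ((-∫ ω, U ω ∂μ : ℝ) : EReal) ≤ expE μ (fun ω => v (U ω)) := by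
  rw [← integral_neg]
  exact coe_integral_le_expE hU.neg (ae_of_all _ fun ω => hv (U ω))

lemma lintegral_epos_neg_comp_ne_top (hv : ∀ y : ℝ, ((-y : ℝ) : EReal) ≤ v y) {U : Ω → ℝ}
    (hU : Integrable U μ) : ∫⁻ ω, epos (-v (U ω)) ∂μ ≠ ⊤ :=
  lintegral_epos_neg_ne_top hU.neg (ae_of_all _ fun ω => hv (U ω))

lemma expE_comp_ne_bot (hv : ∀ y : ℝ, ((-y : ℝ) : EReal) ≤ v y) {U : Ω → ℝ}
    (hU : Integrable U μ) : expE μ (fun ω => v (U ω)) ≠ ⊥ :=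
  ne_bot_of_le_ne_bot (EReal.coe_ne_bot _) (neg_integral_le_expE_comp hv hU)

lemma neg_integral_le_rho [IsProbabilityMeasure μ] (hv : ∀ y : ℝ, ((-y : ℝ) : EReal) ≤ v y)
    {X : Ω → ℝ} (hX : Integrable X μ) : ((-∫ ω, X ω ∂μ : ℝ) : EReal) ≤ rho μ v X := by
  refine le_iInf fun l => ?_
  have hXl : Integrable (fun ω => X ω + l) μ := hX.add (integrable_const l)
  calc ((-∫ ω, X ω ∂μ : ℝ) : EReal) = l + ((-∫ ω, (X ω + l) ∂μ : ℝ) : EReal) := by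
        rw [integral_add hX (integrable_const l), ← EReal.coe_add]
        simp
    _ ≤ l + expE μ (fun ω => v (X ω + l)) := by gcongr; exact neg_integral_le_expE_comp hv hXl

lemma add_expE_comp_convex_comb_le [IsFiniteMeasure μ] (hvm : Measurable v)
    (hv : ∀ y : ℝ, ((-y : ℝ) : EReal) ≤ v y) (hconv : ERealConvexOn v)
    {X Y : Ω → ℝ} (hX : Integrable X μ) (hY : Integrable Y μ)
    {a b : ℝ} (ha : 0 < a) (hb : 0 < b) (hab : a + b = 1) (l₁ l₂ : ℝ) :
    ((a * l₁ + b * l₂ : ℝ) : EReal)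
        + expE μ (fun ω => v (a * X ω + b * Y ω + (a * l₁ + b * l₂)))
      ≤ a * (l₁ + expE μ (fun ω => v (X ω + l₁)))
        + b * (l₂ + expE μ (fun ω => v (Y ω + l₂))) := by
  have hX₁ : Integrable (fun ω => X ω + l₁) μ := hX.add (integrable_const l₁)
  have hY₂ : Integrable (fun ω => Y ω + l₂) μ := hY.add (integrable_const l₂)
  have hbot₁ := expE_comp_ne_bot hv hX₁
  have hbot₂ := expE_comp_ne_bot hv hY₂
  have hF₁ : (l₁ : EReal) + expE μ (fun ω => v (X ω + l₁)) ≠ ⊥ :=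
    EReal.add_ne_bot_iff.2 ⟨EReal.coe_ne_bot l₁, hbot₁⟩
  have hF₂ : (l₂ : EReal) + expE μ (fun ω => v (Y ω + l₂)) ≠ ⊥ :=
    EReal.add_ne_bot_iff.2 ⟨EReal.coe_ne_bot l₂, hbot₂⟩
  by_cases htop₁ : expE μ (fun ω => v (X ω + l₁)) = ⊤
  · rw [htop₁, EReal.coe_add_top, EReal.coe_mul_top_of_pos ha,
      EReal.top_add_of_ne_bot (EReal.coe_mul_ne_bot hb.le hF₂)]
    exact le_top
  by_cases htop₂ : expE μ (fun ω => v (Y ω + l₂)) = ⊤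
  · rw [htop₂, EReal.coe_add_top, EReal.coe_mul_top_of_pos hb,
      EReal.add_top_of_ne_bot (EReal.coe_mul_ne_bot ha.le hF₁)]
    exact le_top
  have hconv_pt : ∀ ω, v (a * X ω + b * Y ω + (a * l₁ + b * l₂))
      ≤ a * v (X ω + l₁) + b * v (Y ω + l₂) := fun ω => by
    convert hconv (X ω + l₁) (Y ω + l₂) a b ha.le hb.le hab using 2; ring
  have hE := expE_le_coe_mul_add_coe_mul (Z₁ := fun ω => v (X ω + l₁))
    (Z₂ := fun ω => v (Y ω + l₂)) (hvm.comp_aemeasurable hX₁.aemeasurable)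
    (hvm.comp_aemeasurable hY₂.aemeasurable) (lintegral_epos_neg_comp_ne_top hv hX₁)
    (lintegral_epos_neg_comp_ne_top hv hY₂) htop₁ htop₂ (ae_of_all _ hconv_pt)
  lift expE μ (fun ω => v (X ω + l₁)) to ℝ using ⟨htop₁, hbot₁⟩ with e₁
  lift expE μ (fun ω => v (Y ω + l₂)) to ℝ using ⟨htop₂, hbot₂⟩ with e₂
  calc ((a * l₁ + b * l₂ : ℝ) : EReal)
        + expE μ (fun ω => v (a * X ω + b * Y ω + (a * l₁ + b * l₂)))
      ≤ ((a * l₁ + b * l₂ : ℝ) : EReal) + (a * e₁ + b * e₂) := by gcongr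
    _ = a * (l₁ + e₁) + b * (l₂ + e₂) := by norm_cast; ring

lemma rho_convex_comb_le [IsProbabilityMeasure μ] (hvm : Measurable v)
    (hv : ∀ y : ℝ, ((-y : ℝ) : EReal) ≤ v y) (hconv : ERealConvexOn v)
    {X Y : Ω → ℝ} (hX : Integrable X μ) (hY : Integrable Y μ)
    {a b : ℝ} (ha : 0 ≤ a) (hb : 0 ≤ b) (hab : a + b = 1) :
    rho μ v (fun ω => a * X ω + b * Y ω) ≤ a * rho μ v X + b * rho μ v Y := by
  rcases ha.eq_or_lt with rfl | ha
  · obtain rfl : b = 1 := by linarith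
    simp
  rcases hb.eq_or_lt with rfl | hb
  · obtain rfl : a = 1 := by linarith
    simp
  have hX_bot := ne_bot_of_le_ne_bot (EReal.coe_ne_bot _) (neg_integral_le_rho hv hX)
  have hY_bot := ne_bot_of_le_ne_bot (EReal.coe_ne_bot _) (neg_integral_le_rho hv hY)
  unfold rho at hX_bot hY_bot ⊢
  rw [EReal.coe_mul_iInf_of_pos ha, EReal.coe_mul_iInf_of_pos hb]
  refine EReal.le_iInf_add_iInf ?_ ?_ fun l₁ l₂ => (iInf_le _ (a * l₁ + b * l₂)).trans
    (add_expE_comp_convex_comb_le hvm hv hconv hX hY ha hb hab l₁ l₂)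
  · rw [← EReal.coe_mul_iInf_of_pos ha]; exact EReal.coe_mul_ne_bot ha.le hX_bot
  · rw [← EReal.coe_mul_iInf_of_pos hb]; exact EReal.coe_mul_ne_bot hb.le hY_bot

lemma rho_le_of_ae_le (hmono : Antitone v) {X Y : Ω → ℝ} (h : ∀ᵐ ω ∂μ, Y ω ≤ X ω) :
    rho μ v X ≤ rho μ v Y :=
  iInf_mono fun l => by
    gcongr
    exact expE_mono (h.mono fun ω hω => hmono (by linarith))

end rho

theorem stmt13_general {Ω : Type*} [MeasurableSpace Ω] (μ : Measure Ω) [IsProbabilityMeasure μ]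
    (v : ℝ → EReal) (hconv : ERealConvexOn v)
    (hmono : ∀ s t : ℝ, s ≤ t → v t ≤ v s) (h0 : v 0 = 0)
    (hsub : ∀ y : ℝ, v y - v 0 ≥ (((-1 : ℝ) * (y - 0) : ℝ) : EReal))
    (p : ENNReal) (hp : 1 ≤ p) :
    (∀ X Y : Ω → ℝ, MemLp X p μ → MemLp Y p μ → ∀ a b : ℝ, 0 ≤ a → 0 ≤ b → a + b = 1 →
        rho μ v (fun ω => a * X ω + b * Y ω) ≤ (a : EReal) * rho μ v X + (b : EReal) * rho μ v Y) ∧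
    (∀ X Y : Ω → ℝ, MemLp X p μ → MemLp Y p μ → (∀ᵐ ω ∂μ, Y ω ≤ X ω) →
        rho μ v X ≤ rho μ v Y) := by
  have hvm : Measurable v := Antitone.measurable hmono
  have hv : ∀ y : ℝ, ((-y : ℝ) : EReal) ≤ v y := fun y => by
    simpa [h0] using hsub y
  exact ⟨fun X Y hX hY a b ha hb hab =>
      rho_convex_comb_le hvm hv hconv (hX.integrable hp) (hY.integrable hp) ha hb hab,
    fun X Y _ _ h => rho_le_of_ae_le hmono h⟩

/-- the OCE-type risk measure `ρ_v` is convex and monotone on `Lᵖ`. -/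
theorem stmt13 {Ω : Type*} [MeasurableSpace Ω] (μ : Measure Ω) [IsProbabilityMeasure μ]
    (v : ℝ → EReal) (hproper : ∃ t, v t ≠ ⊤) (hnotbot : ∀ t, v t ≠ ⊥)
    (hconv : ERealConvexOn v) (hlsc : LowerSemicontinuous v)
    (hmono : ∀ s t : ℝ, s ≤ t → v t ≤ v s) (h0 : v 0 = 0)
    (hsub : ∀ y : ℝ, v y - v 0 ≥ (((-1 : ℝ) * (y - 0) : ℝ) : EReal))
    (p : ENNReal) (hp : 1 ≤ p) :
    (∀ X Y : Ω → ℝ, MemLp X p μ → MemLp Y p μ → ∀ a b : ℝ, 0 ≤ a → 0 ≤ b → a + b = 1 →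
        rho μ v (fun ω => a * X ω + b * Y ω) ≤ (a : EReal) * rho μ v X + (b : EReal) * rho μ v Y) ∧
    (∀ X Y : Ω → ℝ, MemLp X p μ → MemLp Y p μ → (∀ᵐ ω ∂μ, Y ω ≤ X ω) →
        rho μ v X ≤ rho μ v Y) :=
  stmt13_general μ v hconv hmono h0 hsub p hp
end

section
/- Let C be a nonempty convex subset of a separated locally convex space 𝒳 and x ∈ C. Then x belongs to the quasi interior of C (i.e., the closure of cone(C - x) equals 𝒳) if and only if the normal cone N_C(x) = {x* ∈ 𝒳* : ⟨x*, y - x⟩ ≤ 0 for all y ∈ C} equals {0}. -/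
/-!
For convex `C ∋ x` the set `cone (C - x)` is a convex cone, and a continuous functional is
nonpositive on it iff it lies in the normal cone `N_C(x)`. If the cone is dense, such a functional
is nonpositive on all of `𝒳`, hence zero. Conversely, a point outside the closed convex cone
`cl cone (C - x)` is strictly separated from it by Hahn–Banach (Farkas' lemma), and the separating
functional is a nonzero element of `N_C(x)`.
-/

open Set

section Dense

variable {E : Type*} [AddCommGroup E] [Module ℝ E] [TopologicalSpace E]

theorem StrongDual.eq_zero_of_forall_nonpos {f : StrongDual ℝ E} (hf : ∀ z, f z ≤ 0) :
    f = 0 :=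
  ContinuousLinearMap.ext fun z ↦ le_antisymm (hf z) (by simpa using hf (-z))

variable [IsTopologicalAddGroup E] [ContinuousSMul ℝ E] [LocallyConvexSpace ℝ E]

theorem ConvexCone.closure_eq_univ_iff {K : ConvexCone ℝ E} (hK : (K : Set E).Nonempty) :
    closure (K : Set E) = univ ↔ ∀ f : StrongDual ℝ E, (∀ z ∈ K, f z ≤ 0) → f = 0 := by
  refine ⟨fun hdense f hf ↦ StrongDual.eq_zero_of_forall_nonpos fun z ↦ ?_, fun h ↦ ?_⟩
  · have hsub : closure (K : Set E) ⊆ {w | f w ≤ 0} :=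
      closure_minimal hf (isClosed_le f.continuous continuous_const)
    exact hsub (hdense ▸ mem_univ z)
  · by_contra hne
    obtain ⟨z, hz⟩ := (ne_univ_iff_exists_notMem _).1 hne
    lift K.closure to ProperCone ℝ E using
      ⟨hK.mono subset_closure, isClosed_closure⟩ with L hL
    have hmemL : ∀ w, w ∈ L ↔ w ∈ closure (K : Set E) := fun w ↦ by
      rw [← ConvexCone.coe_closure, ← hL]; rfl
    obtain ⟨f, hfL, hfz⟩ := L.hyperplane_separation_point ((hmemL z).not.2 hz)
    have := h (-f) fun k hk ↦ by simpa using hfL k ((hmemL k).2 (subset_closure hk))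
    simp [neg_eq_zero.1 this] at hfz

end Dense

section Hull

variable {E : Type*} [AddCommGroup E] [Module ℝ E]

theorem Convex.image_sub_const {C : Set E} (hC : Convex ℝ C) (x : E) :
    Convex ℝ ((· - x) '' C) := by
  simpa [Set.sub_singleton] using hC.sub (convex_singleton x)

theorem ConvexCone.forall_mem_hull_nonpos_iff {F : Type*} [FunLike F E ℝ]
    [LinearMapClass F ℝ E ℝ] {s : Set E} (hs : Convex ℝ s) (f : F) :
    (∀ z ∈ hull ℝ s, f z ≤ 0) ↔ ∀ z ∈ s, f z ≤ 0 := by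
  refine ⟨fun h z hz ↦ h z (subset_hull hz), fun h z hz ↦ ?_⟩
  obtain ⟨r, hr, y, hy, rfl⟩ := (mem_hull_of_convex hs).1 hz
  simpa using mul_nonpos_of_nonneg_of_nonpos hr.le (h y hy)

theorem ConvexCone.coe_hull_image_sub {C : Set E} {x : E} (hC : Convex ℝ C) (hx : x ∈ C) :
    (hull ℝ ((· - x) '' C) : Set E) =
      {z | ∃ (l : ℝ) (y : E), 0 ≤ l ∧ y ∈ C ∧ z = l • (y - x)} := by
  ext z
  simp only [SetLike.mem_coe, mem_hull_of_convex (hC.image_sub_const x), mem_smul_set,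
    exists_mem_image, mem_ofPred_eq]
  constructor
  · rintro ⟨r, hr, y, hy, rfl⟩
    exact ⟨r, y, hr.le, hy, rfl⟩
  · rintro ⟨l, y, hl, hy, rfl⟩
    rcases hl.eq_or_lt with rfl | hl
    · exact ⟨1, one_pos, x, hx, by simp⟩
    · exact ⟨l, hl, y, hy, rfl⟩

end Hull

theorem stmt19_general {X : Type*} [AddCommGroup X] [Module ℝ X] [TopologicalSpace X]
    [IsTopologicalAddGroup X] [ContinuousSMul ℝ X] [LocallyConvexSpace ℝ X]
    (C : Set X) (hC : Convex ℝ C) (x : X) (hx : x ∈ C) :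
    closure {z : X | ∃ (l : ℝ) (y : X), 0 ≤ l ∧ y ∈ C ∧ z = l • (y - x)} = Set.univ ↔
      {xstar : X →L[ℝ] ℝ | ∀ y ∈ C, xstar (y - x) ≤ 0} = {0} := by
  have hne : (ConvexCone.hull ℝ ((· - x) '' C) : Set X).Nonempty :=
    ⟨0, ConvexCone.subset_hull ⟨x, hx, sub_self x⟩⟩
  rw [← ConvexCone.coe_hull_image_sub hC hx, ConvexCone.closure_eq_univ_iff hne,
    Set.eq_singleton_iff_unique_mem]
  simp only [ConvexCone.forall_mem_hull_nonpos_iff (hC.image_sub_const x), forall_mem_image]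
  exact ⟨fun h ↦ ⟨fun _ _ ↦ by simp, h⟩, And.right⟩

/-- a point `x` of a nonempty convex set `C` in a Hausdorff locally
convex space belongs to the quasi interior of `C` (i.e. `cl cone(C - x) = 𝒳`) iff
the normal cone of `C` at `x` is trivial. -/
theorem stmt19 {X : Type*} [AddCommGroup X] [Module ℝ X] [TopologicalSpace X]
    [IsTopologicalAddGroup X] [ContinuousSMul ℝ X] [LocallyConvexSpace ℝ X] [T2Space X]
    (C : Set X) (hC : Convex ℝ C) (hne : C.Nonempty) (x : X) (hx : x ∈ C) :
    closure {z : X | ∃ (l : ℝ) (y : X), 0 ≤ l ∧ y ∈ C ∧ z = l • (y - x)} = Set.univ ↔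
      {xstar : X →L[ℝ] ℝ | ∀ y ∈ C, xstar (y - x) ≤ 0} = {0} :=
  stmt19_general C hC x hx
end
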